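/- Fix N ≥ 1, m ∈ {1,…,N}, a weight vector w ∈ ℝ^N with strictly positive entries, n* ∈ ℝ^N, γ > 0, a ∈ (0,1], c ∈ (0,1), and a map F̄ : ℝ^N → ℝ^N such that the damped map G(n) = (1−a)·n + a·F̄(n) satisfies ‖G(n) − n*‖_w ≤ c·‖n − n*‖_w for all n ∈ B_γ(n*). Let (Ω, ℱ, (ℱ_k)_{k≥0}, P) be a filtered probability space and (n_k)_{k≥0} an adapted ℝ^N-valued process with n_0 deterministic and n_0 ∈ B_γ(n*), defined by the randomized block-coordinate update n_{k+1}(j) = (1−a)·n_k(j) + a·F̂_k(j) for j ∈ S_k and n_{k+1}(j) = n_k(j) for j ∉ S_k, where: S_k is an ℱ_{k+1}-measurable random subset of {1,…,N} of cardinality m whose conditional distribution given ℱ_k is uniform over all C(N,m) subsets of cardinality m; and F̂_k : Ω → ℝ^N is ℱ_{k+1}-measurable with square-integrable components satisfying, almost surely on the event {n_t ∈ B_γ(n*) for all t ≤ k}, E[F̂_k(j) | ℱ_k, S_k] = F̄(n_k)(j) and E[F̂_k(j)² | ℱ_k, S_k] ≤ (F̄(n_k)(j))² for every j. Let 𝟙_k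 denote the indicator of the event {n_t ∈ B_γ(n*) for all t ≤ k−1}. Then for every k ≥ 1, E[‖n_k − n*‖_w² · 𝟙_k] ≤ (1 − m(1−c²)/N)^k · ‖n_0 − n*‖_w². -/

import Mathlib

open MeasureTheory

/-- Weighted squared norm `‖x‖_w² = Σ_j w(j) x(j)²`. -/
def wnormSq {N : ℕ} (w x : Fin N → ℝ) : ℝ := ∑ j, w j * (x j) ^ 2

/-- Weighted norm `‖x‖_w = sqrt(Σ_j w(j) x(j)²)`. -/
noncomputable def wnorm {N : ℕ} (w x : Fin N → ℝ) : ℝ := Real.sqrt (wnormSq w x)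

/-
On the event that the iterates have stayed in the ball, the hypotheses on `F̂ₖ` say that its
conditional mean given `ℱₖ ∨ σ(Sₖ)` is `F̄(nₖ)` and its conditional second moment is at most
`F̄(nₖ)²`; hence its conditional variance vanishes and `F̂ₖ = F̄(nₖ)` almost surely there. On that
event the process is therefore the deterministic block iteration of `G = (1 - a) id + a F̄` driven
by the blocks `S₀, …, Sₖ₋₁`, a function of finitely many `ℱₖ`-measurable finite-valued variables,
so `G(nₖ)` is `ℱₖ`-measurable although `F̄` need not be. Each coordinate lies in the uniform block
`Sₖ` with conditional probability `m / N`, so with `A` the (`ℱₖ`-measurable) event of staying in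
the ball up to time `k`,
  `E[1_A ‖nₖ₊₁ - n*‖²] = (1 - m/N) E[1_A ‖nₖ - n*‖²] + (m/N) E[1_A ‖G(nₖ) - n*‖²]`,
and the contraction `‖G(n) - n*‖ ≤ c ‖n - n*‖` on the ball gives the factor `1 - m(1 - c²)/N`
per step.
-/

open ProbabilityTheory Finset

section Conditioning

variable {Ω : Type*} {m m₀ : MeasurableSpace Ω} {μ : Measure[m₀] Ω} [IsFiniteMeasure μ]

lemma ae_eq_of_condExp_eq_of_condExp_sq_le (hm : m ≤ m₀) {f V : Ω → ℝ} (hf : MemLp f 2 μ)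
    {A : Set Ω} (hA : MeasurableSet[m] A) (hmean : ∀ᵐ ω ∂μ, ω ∈ A → μ[f|m] ω = V ω)
    (hsq : ∀ᵐ ω ∂μ, ω ∈ A → μ[fun ω => f ω ^ 2|m] ω ≤ V ω ^ 2) :
    ∀ᵐ ω ∂μ, ω ∈ A → f ω = V ω := by
  have hint : Integrable (fun ω => (f ω - μ[f|m] ω) ^ 2) μ :=
    (hf.sub (hf.condExp one_le_two)).integrable_sq
  have hvar_nonpos : ∀ᵐ ω ∂μ, ω ∈ A → Var[f; μ | m] ω ≤ 0 := by
    filter_upwards [condVar_ae_eq_condExp_sq_sub_sq_condExp hm hf, hmean, hsq]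
      with ω hω hωmean hωsq hωA
    rw [hω, Pi.sub_apply, Pi.pow_apply, hωmean hωA]
    exact sub_nonpos.mpr (hωsq hωA)
  have hzero : ∫ ω in A, (f ω - μ[f|m] ω) ^ 2 ∂μ = 0 := by
    refine le_antisymm ?_ (setIntegral_nonneg (hm _ hA) fun ω _ => sq_nonneg _)
    rw [← setIntegral_condVar (hm := hm) hint hA]
    exact setIntegral_nonpos_of_ae_restrict ((ae_restrict_iff' (hm _ hA)).mpr hvar_nonpos)
  have hsq_zero := (setIntegral_eq_zero_iff_of_nonneg_ae
    (ae_of_all _ fun ω => sq_nonneg _) hint.integrableOn).mp hzero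
  filter_upwards [(ae_restrict_iff' (hm _ hA)).mp hsq_zero, hmean] with ω hω hωmean hωA
  rw [← hωmean hωA]
  exact sub_eq_zero.mp (pow_eq_zero_iff two_ne_zero |>.mp (hω hωA))

lemma ae_eq_pi_of_condExp_eq_of_condExp_sq_le {ι : Type*} [Countable ι] (hm : m ≤ m₀)
    {f V : Ω → ι → ℝ} (hf : ∀ j, MemLp (fun ω => f ω j) 2 μ) {A : Set Ω}
    (hA : MeasurableSet[m] A) (hmean : ∀ j, ∀ᵐ ω ∂μ, ω ∈ A → μ[fun ω => f ω j|m] ω = V ω j)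
    (hsq : ∀ j, ∀ᵐ ω ∂μ, ω ∈ A → μ[fun ω => f ω j ^ 2|m] ω ≤ V ω j ^ 2) :
    ∀ᵐ ω ∂μ, ω ∈ A → f ω = V ω := by
  filter_upwards [ae_all_iff.mpr fun j =>
    ae_eq_of_condExp_eq_of_condExp_sq_le hm (hf j) hA (hmean j) (hsq j)] with ω h hω
  exact funext fun j => h j hω

lemma setIntegral_eq_mul_integral_of_condExp_indicator (hm : m ≤ m₀) {E : Set Ω}
    (hE : MeasurableSet E) {p : ℝ} (hp : μ[E.indicator 1|m] =ᵐ[μ] fun _ => p) {g : Ω → ℝ}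
    (hg : StronglyMeasurable[m] g) (hgi : Integrable g μ) :
    ∫ ω in E, g ω ∂μ = p * ∫ ω, g ω ∂μ := by
  have hEi : Integrable (E.indicator (1 : Ω → ℝ)) μ := (integrable_const 1).indicator hE
  have hgE : g * E.indicator 1 = E.indicator g := by
    ext ω; by_cases h : ω ∈ E <;> simp [h]
  calc ∫ ω in E, g ω ∂μ = ∫ ω, (g * E.indicator 1 : Ω → ℝ) ω ∂μ := by
        rw [hgE, integral_indicator hE]
    _ = ∫ ω, μ[(g * E.indicator 1 : Ω → ℝ)|m] ω ∂μ := (integral_condExp hm).symm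
    _ = ∫ ω, g ω * p ∂μ := by
        refine integral_congr_ae ?_
        filter_upwards [condExp_mul_of_stronglyMeasurable_left hg (hgE ▸ hgi.indicator hE) hEi,
          hp] with ω hω hpω
        rw [hω, Pi.mul_apply, hpω]
    _ = p * ∫ ω, g ω ∂μ := by rw [integral_mul_const, mul_comm]

end Conditioning

lemma card_filter_mem_powersetCard_mul {ι : Type*} [Fintype ι] [DecidableEq ι] (j : ι) (k : ℕ) :
    #{s ∈ powersetCard k univ | j ∈ s} * Fintype.card ι = k * (Fintype.card ι).choose k := by
  obtain _ | k := k
  · simp [Finset.filter_eq_empty_iff]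
  obtain ⟨n, hn⟩ : ∃ n, Fintype.card ι = n + 1 :=
    Nat.exists_eq_succ_of_ne_zero (Fintype.card_pos_iff.mpr ⟨j⟩).ne'
  have hcount : #{s ∈ powersetCard (k + 1) univ | j ∈ s} = n.choose k := by
    simpa [hn] using card_filter_powersetCard_subset {j} univ (k + 1) (subset_univ _) (by simp)
  rw [hcount, hn, mul_comm, Nat.add_one_mul_choose_eq, mul_comm]

lemma condExp_indicator_mem_eq_of_uniform {Ω : Type*} {m m₀ : MeasurableSpace Ω}
    {μ : Measure[m₀] Ω} [IsFiniteMeasure μ] {ι : Type*} [Fintype ι] [DecidableEq ι]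
    {S : Ω → Finset ι} {k : ℕ} (hcard : ∀ ω, #(S ω) = k) (hk : k ≤ Fintype.card ι)
    (hSmeas : ∀ s, MeasurableSet {ω | S ω = s})
    (hunif : ∀ s : Finset ι, #s = k →
      μ[{ω | S ω = s}.indicator 1|m] =ᵐ[μ] fun _ => 1 / ((Fintype.card ι).choose k : ℝ))
    (j : ι) :
    μ[{ω | j ∈ S ω}.indicator 1|m] =ᵐ[μ] fun _ => (k : ℝ) / Fintype.card ι := by
  set T := {s ∈ powersetCard k (univ : Finset ι) | j ∈ s}
  have hsum : {ω | j ∈ S ω}.indicator (1 : Ω → ℝ) = ∑ s ∈ T, {ω | S ω = s}.indicator 1 := by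
    ext ω
    simp [Set.indicator_apply, T, hcard]
  have hunifT : ∀ᵐ ω ∂μ, ∀ s ∈ T,
      μ[{ω | S ω = s}.indicator 1|m] ω = 1 / ((Fintype.card ι).choose k : ℝ) :=
    (Filter.eventually_all_finset T).mpr fun s hs =>
      hunif s (mem_powersetCard.mp (mem_filter.mp hs).1).2
  filter_upwards [condExp_finsetSum (s := T) (f := fun s => {ω | S ω = s}.indicator 1)
    (fun s _ => (integrable_const (1 : ℝ)).indicator (hSmeas s)) m,
    hunifT] with ω hω hωT
  have hchoose : ((Fintype.card ι).choose k : ℝ) ≠ 0 := by exact_mod_cast (Nat.choose_pos hk).ne'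
  have hcardι : (Fintype.card ι : ℝ) ≠ 0 := by exact_mod_cast (Fintype.card_pos_iff.mpr ⟨j⟩).ne'
  rw [hsum, hω, Finset.sum_apply, sum_congr rfl hωT, sum_const, nsmul_eq_mul,
    ← div_eq_mul_one_div, div_eq_div_iff hchoose hcardι]
  exact_mod_cast card_filter_mem_powersetCard_mul j k

lemma wnormSq_nonneg {N : ℕ} {w : Fin N → ℝ} (hw : ∀ j, 0 ≤ w j) (x : Fin N → ℝ) :
    0 ≤ wnormSq w x :=
  sum_nonneg fun j _ => mul_nonneg (hw j) (sq_nonneg _)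

lemma wnormSq_indicator {Ω : Type*} {N : ℕ} (w : Fin N → ℝ) (A : Set Ω) (f : Ω → Fin N → ℝ)
    (ω : Ω) : wnormSq w (A.indicator f ω) = A.indicator (fun ω => wnormSq w (f ω)) ω :=
  congrFun (Set.indicator_comp_of_zero (g := wnormSq w) (by simp [wnormSq])).symm ω

lemma wnormSq_le_sq_mul_of_wnorm_le {N : ℕ} {w : Fin N → ℝ} (hw : ∀ j, 0 ≤ w j)
    {x y : Fin N → ℝ} {c : ℝ} (h : wnorm w x ≤ c * wnorm w y) :
    wnormSq w x ≤ c ^ 2 * wnormSq w y := by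
  have hsq := pow_le_pow_left₀ (Real.sqrt_nonneg _) h 2
  unfold wnorm at hsq
  rwa [mul_pow, Real.sq_sqrt (wnormSq_nonneg hw _), Real.sq_sqrt (wnormSq_nonneg hw _)] at hsq

lemma continuous_wnorm {N : ℕ} (w : Fin N → ℝ) : Continuous (wnorm w) := by
  unfold wnorm wnormSq
  fun_prop

lemma wnormSq_piecewise {N : ℕ} (w : Fin N → ℝ) (s : Finset (Fin N)) (x y : Fin N → ℝ) :
    wnormSq w (s.piecewise y x) =
      wnormSq w x + ∑ j, w j * if j ∈ s then y j ^ 2 - x j ^ 2 else 0 := by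
  simp only [wnormSq, ← sum_add_distrib, Finset.piecewise]
  refine sum_congr rfl fun j _ => ?_
  split_ifs <;> ring

lemma integrable_wnormSq {Ω : Type*} {m₀ : MeasurableSpace Ω} {μ : Measure[m₀] Ω} {N : ℕ}
    (w : Fin N → ℝ) {X : Ω → Fin N → ℝ} (hX : ∀ j, Integrable (fun ω => X ω j ^ 2) μ) :
    Integrable (fun ω => wnormSq w (X ω)) μ :=
  integrable_finsetSum _ fun j _ => (hX j).const_mul _

lemma integral_wnormSq {Ω : Type*} {m₀ : MeasurableSpace Ω} {μ : Measure[m₀] Ω} {N : ℕ}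
    (w : Fin N → ℝ) {X : Ω → Fin N → ℝ} (hX : ∀ j, Integrable (fun ω => X ω j ^ 2) μ) :
    ∫ ω, wnormSq w (X ω) ∂μ = ∑ j, w j * ∫ ω, X ω j ^ 2 ∂μ := by
  simp only [wnormSq]
  rw [integral_finsetSum _ fun j _ => (hX j).const_mul _]
  simp only [integral_const_mul]

lemma integral_wnormSq_piecewise {Ω : Type*} {m m₀ : MeasurableSpace Ω} {μ : Measure[m₀] Ω}
    [IsFiniteMeasure μ] (hm : m ≤ m₀) {N : ℕ} (w : Fin N → ℝ) {S : Ω → Finset (Fin N)} {p : ℝ}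
    (hSmeas : ∀ j, MeasurableSet {ω | j ∈ S ω})
    (hp : ∀ j, μ[{ω | j ∈ S ω}.indicator 1|m] =ᵐ[μ] fun _ => p) {X Y : Ω → Fin N → ℝ}
    (hX : ∀ j, StronglyMeasurable[m] fun ω => X ω j)
    (hY : ∀ j, StronglyMeasurable[m] fun ω => Y ω j)
    (hXi : ∀ j, Integrable (fun ω => X ω j ^ 2) μ) (hYi : ∀ j, Integrable (fun ω => Y ω j ^ 2) μ) :
    ∫ ω, wnormSq w ((S ω).piecewise (Y ω) (X ω)) ∂μ =
      (1 - p) * ∫ ω, wnormSq w (X ω) ∂μ + p * ∫ ω, wnormSq w (Y ω) ∂μ := by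
  set D : Fin N → Ω → ℝ := fun j ω => Y ω j ^ 2 - X ω j ^ 2
  have hDi : ∀ j, Integrable (D j) μ := fun j => (hYi j).sub (hXi j)
  have hDm : ∀ j, StronglyMeasurable[m] (D j) := fun j => ((hY j).pow 2).sub ((hX j).pow 2)
  calc ∫ ω, wnormSq w ((S ω).piecewise (Y ω) (X ω)) ∂μ
      = ∫ ω, wnormSq w (X ω) + ∑ j, w j * {ω | j ∈ S ω}.indicator (D j) ω ∂μ := by
        simp only [wnormSq_piecewise, Set.indicator_apply, Set.mem_ofPred_eq, D]
    _ = ∫ ω, wnormSq w (X ω) ∂μ + ∑ j, w j * (p * ∫ ω, D j ω ∂μ) := by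
        rw [integral_add (integrable_wnormSq w hXi)
            (integrable_finsetSum _ fun j _ => ((hDi j).indicator (hSmeas j)).const_mul _),
          integral_finsetSum _ fun j _ => ((hDi j).indicator (hSmeas j)).const_mul _]
        simp only [integral_const_mul, integral_indicator (hSmeas _),
          setIntegral_eq_mul_integral_of_condExp_indicator hm (hSmeas _) (hp _) (hDm _) (hDi _)]
    _ = (1 - p) * ∫ ω, wnormSq w (X ω) ∂μ + p * ∫ ω, wnormSq w (Y ω) ∂μ := by
        simp only [integral_wnormSq w hXi, integral_wnormSq w hYi, D,
          integral_sub (hYi _) (hXi _), mul_sum, ← sum_add_distrib]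
        refine sum_congr rfl fun j _ => ?_
        ring

lemma MeasureTheory.StronglyAdapted.measurableSet_forall_lt_mem {Ω β : Type*}
    {m₀ : MeasurableSpace Ω} [TopologicalSpace β] [TopologicalSpace.PseudoMetrizableSpace β]
    [MeasurableSpace β] [BorelSpace β] {ℱ : Filtration ℕ m₀} {n : ℕ → Ω → β}
    (hn : StronglyAdapted ℱ n) {C : Set β} (hC : MeasurableSet C) (k : ℕ) :
    MeasurableSet[ℱ k] {ω | ∀ t < k + 1, n t ω ∈ C} := by
  have hset : {ω | ∀ t < k + 1, n t ω ∈ C} = ⋂ t, ⋂ (_ : t < k + 1), n t ⁻¹' C := by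
    ext; simp
  rw [hset]
  exact .iInter fun t => .iInter fun ht =>
    ((hn t).measurable.mono (ℱ.mono (Nat.lt_succ_iff.mp ht)) le_rfl) hC

lemma measurable_blockHistory {Ω ι : Type*} {m₀ : MeasurableSpace Ω} {ℱ : Filtration ℕ m₀}
    {S : ℕ → Ω → Finset ι} (hS : ∀ t, Measurable[ℱ (t + 1)] (S t)) (k : ℕ) :
    Measurable[ℱ k] fun ω (t : Fin k) => S t ω :=
  @measurable_pi_lambda Ω (Fin k) (fun _ => Finset ι) (ℱ k) _ _
    fun t => (hS t).mono (ℱ.mono t.isLt) le_rfl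

section BlockIterate

variable {ι β : Type*} [DecidableEq ι] (G : (ι → β) → ι → β) (x₀ : ι → β)

def blockIterate : (k : ℕ) → (Fin k → Finset ι) → ι → β
  | 0, _ => x₀
  | k + 1, σ => (σ (Fin.last k)).piecewise (G (blockIterate k (Fin.init σ)))
      (blockIterate k (Fin.init σ))

variable {Ω : Type*} {m₀ : MeasurableSpace Ω}

lemma ae_eq_blockIterate {μ : Measure Ω} {n U : ℕ → Ω → ι → β} {S : ℕ → Ω → Finset ι}
    {E : ℕ → Set Ω} (hE : Antitone E) (h0 : ∀ ω, n 0 ω = x₀)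
    (hupd : ∀ k ω, n (k + 1) ω = (S k ω).piecewise (U k ω) (n k ω))
    (hU : ∀ k, ∀ᵐ ω ∂μ, ω ∈ E (k + 1) → U k ω = G (n k ω)) (k : ℕ) :
    ∀ᵐ ω ∂μ, ω ∈ E k → n k ω = blockIterate G x₀ k fun t => S t ω := by
  induction k with
  | zero => exact ae_of_all _ fun ω _ => h0 ω
  | succ k ih =>
    filter_upwards [ih, hU k] with ω hn hUω hω
    rw [hupd, hUω hω, hn (hE k.le_succ hω)]
    rfl

variable [Finite ι] {ℱ : Filtration ℕ m₀} {S : ℕ → Ω → Finset ι}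

lemma measurable_comp_blockIterate (hS : ∀ t, Measurable[ℱ (t + 1)] (S t)) {γ : Type*}
    [MeasurableSpace γ] (f : (ι → β) → γ) (k : ℕ) :
    Measurable[ℱ k] fun ω => f (blockIterate G x₀ k fun t => S t ω) :=
  (Measurable.of_discrete (f := fun σ => f (blockIterate G x₀ k σ))).comp
    (measurable_blockHistory hS k)

lemma integrable_comp_blockIterate {μ : Measure Ω} [IsFiniteMeasure μ]
    (hS : ∀ t, Measurable[ℱ (t + 1)] (S t)) (f : (ι → β) → ℝ) (k : ℕ) :
    Integrable (fun ω => f (blockIterate G x₀ k fun t => S t ω)) μ :=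
  (Integrable.of_finite (f := fun σ => f (blockIterate G x₀ k σ))).comp_measurable
    ((measurable_blockHistory hS k).mono (ℱ.le k) le_rfl)

end BlockIterate

lemma integral_indicator_wnormSq_blockIterate_succ {Ω : Type*} {m₀ : MeasurableSpace Ω}
    {μ : Measure Ω} [IsFiniteMeasure μ] {ℱ : Filtration ℕ m₀} {N : ℕ}
    {S : ℕ → Ω → Finset (Fin N)} (hS : ∀ t, Measurable[ℱ (t + 1)] (S t)) {k : ℕ} {p : ℝ}
    (hp : ∀ j, μ[{ω | j ∈ S k ω}.indicator 1|ℱ k] =ᵐ[μ] fun _ => p)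
    (w : Fin N → ℝ) (G : (Fin N → ℝ) → Fin N → ℝ) (x₀ z : Fin N → ℝ) {A : Set Ω}
    (hA : MeasurableSet[ℱ k] A) :
    ∫ ω, A.indicator (fun ω => wnormSq w ((blockIterate G x₀ (k + 1) fun t => S t ω) - z)) ω ∂μ =
      (1 - p) *
          ∫ ω, A.indicator (fun ω => wnormSq w ((blockIterate G x₀ k fun t => S t ω) - z)) ω ∂μ +
        p * ∫ ω, A.indicator
          (fun ω => wnormSq w (G (blockIterate G x₀ k fun t => S t ω) - z)) ω ∂μ := by
  set M : Ω → Fin N → ℝ := fun ω => blockIterate G x₀ k fun t => S t ω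
  have hSmeas : ∀ j, MeasurableSet {ω | j ∈ S k ω} := fun j =>
    (hS k).mono (ℱ.le _) le_rfl (measurableSet_setOfPred.mpr (measurable_finset_mem j))
  have hmeas : ∀ (f : (Fin N → ℝ) → Fin N → ℝ) j,
      StronglyMeasurable[ℱ k] fun ω => A.indicator (fun ω => f (M ω)) ω j := fun f j =>
    ((measurable_pi_apply j).comp
      ((measurable_comp_blockIterate G x₀ hS f k).indicator hA)).stronglyMeasurable
  have hsq : ∀ (f : (Fin N → ℝ) → Fin N → ℝ) j,
      Integrable (fun ω => A.indicator (fun ω => f (M ω)) ω j ^ 2) μ := fun f j => by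
    refine ((integrable_comp_blockIterate G x₀ hS (fun x => f x j ^ 2) k).indicator
      (ℱ.le k _ hA)).congr (ae_of_all _ fun ω => ?_)
    by_cases hω : ω ∈ A <;> simp [hω, M]
  -- Truncating by `1_A` commutes with the block update, so `integral_wnormSq_piecewise` applies
  -- to the truncated vectors.
  have hpiece : ∀ ω,
      A.indicator (fun ω => wnormSq w ((blockIterate G x₀ (k + 1) fun t => S t ω) - z)) ω =
        wnormSq w ((S k ω).piecewise (A.indicator (fun ω => G (M ω) - z) ω)
          (A.indicator (fun ω => M ω - z) ω)) := fun ω => by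
    by_cases hω : ω ∈ A
    · simp only [Set.indicator_of_mem hω]
      congr 1
      ext j
      simp only [blockIterate, Fin.val_last, Finset.piecewise, Pi.sub_apply, M]
      split_ifs <;> rfl
    · simp [hω, wnormSq, Finset.piecewise_same]
  rw [integral_congr_ae (ae_of_all _ hpiece), integral_wnormSq_piecewise (ℱ.le k) w hSmeas hp
    (hmeas fun x => x - z) (hmeas fun x => G x - z) (hsq fun x => x - z) (hsq fun x => G x - z)]
  simp only [wnormSq_indicator, M]

lemma integral_indicator_wnormSq_blockIterate_succ_le {Ω : Type*} {m₀ : MeasurableSpace Ω}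
    {μ : Measure Ω} [IsFiniteMeasure μ] {ℱ : Filtration ℕ m₀} {N : ℕ}
    {S : ℕ → Ω → Finset (Fin N)} (hS : ∀ t, Measurable[ℱ (t + 1)] (S t)) {k : ℕ} {p : ℝ}
    (hp0 : 0 ≤ p) (hp1 : p ≤ 1) (hp : ∀ j, μ[{ω | j ∈ S k ω}.indicator 1|ℱ k] =ᵐ[μ] fun _ => p)
    {w : Fin N → ℝ} (hw : ∀ j, 0 ≤ w j) (G : (Fin N → ℝ) → Fin N → ℝ) (x₀ z : Fin N → ℝ)
    {c : ℝ} {A B : Set Ω} (hAB : A ⊆ B) (hA : MeasurableSet[ℱ k] A) (hB : MeasurableSet B)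
    (hcontr : ∀ᵐ ω ∂μ, ω ∈ A → wnormSq w (G (blockIterate G x₀ k fun t => S t ω) - z) ≤
      c ^ 2 * wnormSq w ((blockIterate G x₀ k fun t => S t ω) - z)) :
    ∫ ω, A.indicator (fun ω => wnormSq w ((blockIterate G x₀ (k + 1) fun t => S t ω) - z)) ω ∂μ ≤
      (1 - p * (1 - c ^ 2)) *
        ∫ ω, B.indicator (fun ω => wnormSq w ((blockIterate G x₀ k fun t => S t ω) - z)) ω ∂μ := by
  set M : Ω → Fin N → ℝ := fun ω => blockIterate G x₀ k fun t => S t ω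
  have hint : ∀ f : (Fin N → ℝ) → ℝ, Integrable (A.indicator fun ω => f (M ω)) μ := fun f =>
    (integrable_comp_blockIterate G x₀ hS f k).indicator (ℱ.le k _ hA)
  have hG : ∫ ω, A.indicator (fun ω => wnormSq w (G (M ω) - z)) ω ∂μ ≤
      c ^ 2 * ∫ ω, A.indicator (fun ω => wnormSq w (M ω - z)) ω ∂μ := by
    rw [← integral_const_mul]
    refine integral_mono_ae (hint fun x => wnormSq w (G x - z))
      ((hint fun x => wnormSq w (x - z)).const_mul _) ?_
    filter_upwards [hcontr] with ω hω
    by_cases hωA : ω ∈ A <;> simp [hωA, hω, M]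
  have hAB : ∫ ω, A.indicator (fun ω => wnormSq w (M ω - z)) ω ∂μ ≤
      ∫ ω, B.indicator (fun ω => wnormSq w (M ω - z)) ω ∂μ :=
    integral_mono (hint fun x => wnormSq w (x - z))
      ((integrable_comp_blockIterate G x₀ hS (fun x => wnormSq w (x - z)) k).indicator hB)
      (Set.indicator_le_indicator_of_subset hAB fun _ => wnormSq_nonneg hw _)
  have hρ : 0 ≤ 1 - p * (1 - c ^ 2) := by nlinarith [sq_nonneg c]
  rw [integral_indicator_wnormSq_blockIterate_succ hS hp w G x₀ z hA]
  calc _ ≤ (1 - p) * ∫ ω, A.indicator (fun ω => wnormSq w (M ω - z)) ω ∂μ +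
        p * (c ^ 2 * ∫ ω, A.indicator (fun ω => wnormSq w (M ω - z)) ω ∂μ) :=
        add_le_add le_rfl (mul_le_mul_of_nonneg_left hG hp0)
    _ = (1 - p * (1 - c ^ 2)) * ∫ ω, A.indicator (fun ω => wnormSq w (M ω - z)) ω ∂μ := by ring
    _ ≤ _ := mul_le_mul_of_nonneg_left hAB hρ

lemma integral_indicator_wnormSq_blockIterate_le_pow {Ω : Type*} {m₀ : MeasurableSpace Ω}
    {μ : Measure Ω} [IsProbabilityMeasure μ] {ℱ : Filtration ℕ m₀} {N : ℕ}
    {S : ℕ → Ω → Finset (Fin N)} (hS : ∀ t, Measurable[ℱ (t + 1)] (S t)) {p : ℝ}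
    (hp0 : 0 ≤ p) (hp1 : p ≤ 1)
    (hp : ∀ k j, μ[{ω | j ∈ S k ω}.indicator 1|ℱ k] =ᵐ[μ] fun _ => p)
    {w : Fin N → ℝ} (hw : ∀ j, 0 ≤ w j) (G : (Fin N → ℝ) → Fin N → ℝ) (x₀ z : Fin N → ℝ)
    {c : ℝ} {E : ℕ → Set Ω} (hE : Antitone E) (hE0 : E 0 = Set.univ)
    (hEm : ∀ k, MeasurableSet[ℱ k] (E (k + 1)))
    (hcontr : ∀ k, ∀ᵐ ω ∂μ, ω ∈ E (k + 1) →
      wnormSq w (G (blockIterate G x₀ k fun t => S t ω) - z) ≤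
        c ^ 2 * wnormSq w ((blockIterate G x₀ k fun t => S t ω) - z)) (k : ℕ) :
    ∫ ω, (E k).indicator (fun ω => wnormSq w ((blockIterate G x₀ k fun t => S t ω) - z)) ω ∂μ ≤
      (1 - p * (1 - c ^ 2)) ^ k * wnormSq w (x₀ - z) := by
  induction k with
  | zero => simp [hE0, blockIterate]
  | succ k ih =>
    have hEk : MeasurableSet (E k) := by
      cases k with
      | zero => simp [hE0]
      | succ k => exact ℱ.le _ _ (hEm k)
    have hρ : 0 ≤ 1 - p * (1 - c ^ 2) := by nlinarith [sq_nonneg c]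
    calc _ ≤ (1 - p * (1 - c ^ 2)) * ∫ ω, (E k).indicator
            (fun ω => wnormSq w ((blockIterate G x₀ k fun t => S t ω) - z)) ω ∂μ :=
          integral_indicator_wnormSq_blockIterate_succ_le hS hp0 hp1 (hp k) hw G x₀ z
            (hE k.le_succ) (hEm k) hEk (hcontr k)
      _ ≤ _ := by
          rw [pow_succ' (1 - p * (1 - c ^ 2)) k, mul_assoc]
          exact mul_le_mul_of_nonneg_left ih hρ

lemma integral_indicator_wnormSq_le_pow_of_piecewise_update {Ω : Type*} {m₀ : MeasurableSpace Ω}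
    {μ : Measure Ω} [IsProbabilityMeasure μ] {ℱ : Filtration ℕ m₀} {N : ℕ}
    {S : ℕ → Ω → Finset (Fin N)} (hS : ∀ t, Measurable[ℱ (t + 1)] (S t)) {p : ℝ}
    (hp0 : 0 ≤ p) (hp1 : p ≤ 1)
    (hp : ∀ k j, μ[{ω | j ∈ S k ω}.indicator 1|ℱ k] =ᵐ[μ] fun _ => p)
    {w : Fin N → ℝ} (hw : ∀ j, 0 ≤ w j) {G : (Fin N → ℝ) → Fin N → ℝ} {x₀ z : Fin N → ℝ}
    {c : ℝ} {n U : ℕ → Ω → Fin N → ℝ} (hn0 : ∀ ω, n 0 ω = x₀)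
    (hupd : ∀ k ω, n (k + 1) ω = (S k ω).piecewise (U k ω) (n k ω))
    {E : ℕ → Set Ω} (hE : Antitone E) (hE0 : E 0 = Set.univ)
    (hEm : ∀ k, MeasurableSet[ℱ k] (E (k + 1)))
    (hU : ∀ k, ∀ᵐ ω ∂μ, ω ∈ E (k + 1) → U k ω = G (n k ω))
    (hcontr : ∀ k, ∀ ω ∈ E (k + 1), wnormSq w (G (n k ω) - z) ≤ c ^ 2 * wnormSq w (n k ω - z))
    (k : ℕ) :
    ∫ ω, (E k).indicator (fun ω => wnormSq w (n k ω - z)) ω ∂μ ≤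
      (1 - p * (1 - c ^ 2)) ^ k * wnormSq w (x₀ - z) := by
  have hagree := ae_eq_blockIterate G x₀ hE hn0 hupd hU
  calc _ = ∫ ω, (E k).indicator
        (fun ω => wnormSq w ((blockIterate G x₀ k fun t => S t ω) - z)) ω ∂μ := by
        refine integral_congr_ae ?_
        filter_upwards [hagree k] with ω h
        by_cases hω : ω ∈ E k
        · simp only [Set.indicator_of_mem hω, h hω]
        · simp only [Set.indicator_of_notMem hω]
    _ ≤ _ := by
        refine integral_indicator_wnormSq_blockIterate_le_pow hS hp0 hp1 hp hw G x₀ z hE hE0 hEm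
          (fun k => ?_) k
        filter_upwards [hagree k] with ω h hω
        rw [← h (hE k.le_succ hω)]
        exact hcontr k ω hω

theorem rbcfp_linear_convergence_general {N : ℕ} (m : ℕ)
    (hmN : m ≤ N) (w : Fin N → ℝ) (hw : ∀ j, 0 < w j) (nstar : Fin N → ℝ)
    (γ : ℝ) (a : ℝ)
    (c : ℝ)
    (Fbar : (Fin N → ℝ) → (Fin N → ℝ))
    (hcontr : ∀ n : Fin N → ℝ, wnorm w (n - nstar) ≤ γ →
      wnorm w (((1 - a) • n + a • Fbar n) - nstar) ≤ c * wnorm w (n - nstar))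
    {Ω : Type*} {m0 : MeasurableSpace Ω} (P : Measure Ω) [IsProbabilityMeasure P]
    (ℱ : Filtration ℕ m0) (n : ℕ → Ω → Fin N → ℝ) (hadapt : StronglyAdapted ℱ n)
    (n0 : Fin N → ℝ) (hn0 : ∀ ω, n 0 ω = n0)
    (S : ℕ → Ω → Finset (Fin N)) (hScard : ∀ k ω, (S k ω).card = m)
    (hSmeas : ∀ k, MeasurableSpace.comap (S k) (⊤ : MeasurableSpace (Finset (Fin N))) ≤
      ℱ (k + 1))
    (hSuniform : ∀ k, ∀ s : Finset (Fin N), s.card = m →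
      ∀ᵐ ω ∂P, (P[fun ω => if S k ω = s then (1 : ℝ) else 0|ℱ k]) ω =
        1 / (N.choose m : ℝ))
    (Fhat : ℕ → Ω → Fin N → ℝ)
    (hFl2 : ∀ k j, MemLp (fun ω => Fhat k ω j) 2 P)
    (hupdate : ∀ k ω j, n (k + 1) ω j =
      if j ∈ S k ω then (1 - a) * n k ω j + a * Fhat k ω j else n k ω j)
    (hunbiased : ∀ k j, ∀ᵐ ω ∂P, (∀ t ≤ k, wnorm w (n t ω - nstar) ≤ γ) →
      (P[fun ω => Fhat k ω j|ℱ k ⊔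
        MeasurableSpace.comap (S k) (⊤ : MeasurableSpace (Finset (Fin N)))]) ω =
        Fbar (n k ω) j)
    (hsecond : ∀ k j, ∀ᵐ ω ∂P, (∀ t ≤ k, wnorm w (n t ω - nstar) ≤ γ) →
      (P[fun ω => (Fhat k ω j) ^ 2|ℱ k ⊔
        MeasurableSpace.comap (S k) (⊤ : MeasurableSpace (Finset (Fin N)))]) ω ≤
        (Fbar (n k ω) j) ^ 2) :
    ∀ k : ℕ, 1 ≤ k →
      ∫ ω, Set.indicator {ω : Ω | ∀ t < k, wnorm w (n t ω - nstar) ≤ γ}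
          (fun ω => wnormSq w (n k ω - nstar)) ω ∂P ≤
        (1 - (m : ℝ) * (1 - c ^ 2) / N) ^ k * wnormSq w (n0 - nstar) := by
  intro k _
  have hS : ∀ t, Measurable[ℱ (t + 1)] (S t) := fun t =>
    (measurable_iff_comap_le.mpr (hSmeas t)).mono le_rfl le_top
  have hincl : ∀ t j, P[{ω | j ∈ S t ω}.indicator 1|ℱ t] =ᵐ[P] fun _ => (m : ℝ) / N :=
    fun t j => by
      have hind : ∀ s, {ω | S t ω = s}.indicator (1 : Ω → ℝ) =
          fun ω => if S t ω = s then 1 else 0 := fun s => by ext ω; simp [Set.indicator_apply]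
      simpa using condExp_indicator_mem_eq_of_uniform (hScard t) (by simpa using hmN)
        (fun s => (hS t).mono (ℱ.le _) le_rfl (measurableSet_singleton s))
        (fun s hs => by rw [hind, Fintype.card_fin]; exact hSuniform t s hs) j
  set C : Set (Fin N → ℝ) := {x | wnorm w (x - nstar) ≤ γ}
  have hBm : ∀ k, MeasurableSet[ℱ k] {ω | ∀ t < k + 1, n t ω ∈ C} :=
    StronglyAdapted.measurableSet_forall_lt_mem hadapt <| measurableSet_le
      ((continuous_wnorm w).comp (continuous_sub_right nstar)).measurable measurable_const
  have hFhat : ∀ k, ∀ᵐ ω ∂P, (∀ t < k + 1, n t ω ∈ C) → Fhat k ω = Fbar (n k ω) := fun k =>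
    ae_eq_pi_of_condExp_eq_of_condExp_sq_le (sup_le (ℱ.le k) ((hSmeas k).trans (ℱ.le _)))
      (hFl2 k) (le_sup_left (a := ℱ k) _ (hBm k))
      (fun j => (hunbiased k j).mono fun ω h hω => h fun t ht => hω t (Nat.lt_succ_of_le ht))
      (fun j => (hsecond k j).mono fun ω h hω => h fun t ht => hω t (Nat.lt_succ_of_le ht))
  rw [← div_mul_eq_mul_div]
  refine integral_indicator_wnormSq_le_pow_of_piecewise_update
    (E := fun k => {ω | ∀ t < k, n t ω ∈ C}) (G := fun x => (1 - a) • x + a • Fbar x)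
    (U := fun k ω => (1 - a) • n k ω + a • Fhat k ω)
    hS (by positivity) (div_le_one_of_le₀ (by exact_mod_cast hmN) (Nat.cast_nonneg N)) hincl
    (fun j => (hw j).le) hn0 (fun k ω => by ext j; simp [hupdate, Finset.piecewise])
    (fun k l hkl ω hω t ht => hω t (ht.trans_le hkl)) (by simp) hBm
    (fun k => (hFhat k).mono fun ω h hω => by simp [h hω])
    (fun k ω hω => wnormSq_le_sq_mul_of_wnorm_le (fun j => (hw j).le)
      (hcontr _ (hω k k.lt_succ_self))) k

/-- Convergence of the randomized block-coordinate fixed-point iteration: with uniformly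
random blocks `S_k` of size `m` and conditionally unbiased coordinate estimates with
conditional second moments bounded by the squared means, the iterates satisfy
`E[‖n_k − n*‖_w² 𝟙_k] ≤ (1 − m(1−c²)/N)^k ‖n_0 − n*‖_w²`. -/
theorem rbcfp_linear_convergence {N : ℕ} (hN : 1 ≤ N) (m : ℕ) (hm1 : 1 ≤ m)
    (hmN : m ≤ N) (w : Fin N → ℝ) (hw : ∀ j, 0 < w j) (nstar : Fin N → ℝ)
    (γ : ℝ) (hγ : 0 < γ) (a : ℝ) (ha : 0 < a) (ha' : a ≤ 1)
    (c : ℝ) (hc : 0 < c) (hc' : c < 1)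
    (Fbar : (Fin N → ℝ) → (Fin N → ℝ))
    (hcontr : ∀ n : Fin N → ℝ, wnorm w (n - nstar) ≤ γ →
      wnorm w (((1 - a) • n + a • Fbar n) - nstar) ≤ c * wnorm w (n - nstar))
    {Ω : Type*} {m0 : MeasurableSpace Ω} (P : Measure Ω) [IsProbabilityMeasure P]
    (ℱ : Filtration ℕ m0) (n : ℕ → Ω → Fin N → ℝ) (hadapt : StronglyAdapted ℱ n)
    (n0 : Fin N → ℝ) (hn0 : ∀ ω, n 0 ω = n0) (hball0 : wnorm w (n0 - nstar) ≤ γ)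
    (S : ℕ → Ω → Finset (Fin N)) (hScard : ∀ k ω, (S k ω).card = m)
    (hSmeas : ∀ k, MeasurableSpace.comap (S k) (⊤ : MeasurableSpace (Finset (Fin N))) ≤
      ℱ (k + 1))
    (hSuniform : ∀ k, ∀ s : Finset (Fin N), s.card = m →
      ∀ᵐ ω ∂P, (P[fun ω => if S k ω = s then (1 : ℝ) else 0|ℱ k]) ω =
        1 / (N.choose m : ℝ))
    (Fhat : ℕ → Ω → Fin N → ℝ)
    (hFmeas : ∀ k, StronglyMeasurable[ℱ (k + 1)] (Fhat k))
    (hFl2 : ∀ k j, MemLp (fun ω => Fhat k ω j) 2 P)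
    (hupdate : ∀ k ω j, n (k + 1) ω j =
      if j ∈ S k ω then (1 - a) * n k ω j + a * Fhat k ω j else n k ω j)
    (hunbiased : ∀ k j, ∀ᵐ ω ∂P, (∀ t ≤ k, wnorm w (n t ω - nstar) ≤ γ) →
      (P[fun ω => Fhat k ω j|ℱ k ⊔
        MeasurableSpace.comap (S k) (⊤ : MeasurableSpace (Finset (Fin N)))]) ω =
        Fbar (n k ω) j)
    (hsecond : ∀ k j, ∀ᵐ ω ∂P, (∀ t ≤ k, wnorm w (n t ω - nstar) ≤ γ) →
      (P[fun ω => (Fhat k ω j) ^ 2|ℱ k ⊔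
        MeasurableSpace.comap (S k) (⊤ : MeasurableSpace (Finset (Fin N)))]) ω ≤
        (Fbar (n k ω) j) ^ 2) :
    ∀ k : ℕ, 1 ≤ k →
      ∫ ω, Set.indicator {ω : Ω | ∀ t < k, wnorm w (n t ω - nstar) ≤ γ}
          (fun ω => wnormSq w (n k ω - nstar)) ω ∂P ≤
        (1 - (m : ℝ) * (1 - c ^ 2) / N) ^ k * wnormSq w (n0 - nstar) :=
  rbcfp_linear_convergence_general m hmN w hw nstar γ a c Fbar hcontr P ℱ n hadapt n0 hn0 S hScard
    hSmeas hSuniform Fhat hFl2 hupdate hunbiased hsecond
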